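/- arXiv:1509.00715 — 4 statements merged into one kernel-verified Lean document; each statement's English description precedes it below -/
import Mathlib

section
/- Let A and B be positive semidefinite operators on a finite-dimensional complex inner product space with non-disjoint supports, and define μ(s) = log Tr(A^{1-s} B^s) for s ∈ (0,1). Then μ is convex on (0,1). -/
open Matrix
open scoped ComplexOrder

/-- Operator power of a matrix via the continuous functional calculus
(spectral decomposition), with `0 ^ t = 0` for `t ∈ (0,1)`. -/
noncomputable def mpow {d : ℕ} (A : Matrix (Fin d) (Fin d) ℂ) (t : ℝ) : Matrix (Fin d) (Fin d) ℂ :=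
  cfc (fun x : ℝ => x ^ t) A

/-- μ(s) = log Tr(A^{1-s} B^s). -/
noncomputable def mu {d : ℕ} (A B : Matrix (Fin d) (Fin d) ℂ) (s : ℝ) : ℝ :=
  Real.log ((mpow A (1 - s) * mpow B s).trace.re)

/-- log of a finite nonneg combination of exponentials is convex. -/
lemma logsumexp_convexOn {ι : Type*} [Fintype ι] (c θ : ι → ℝ) (hc : ∀ i, 0 ≤ c i) :
    ConvexOn ℝ Set.univ (fun s => Real.log (∑ i, c i * Real.exp (θ i * s))) := by
  by_cases hall : ∀ i, c i = 0
  · simp only [hall, zero_mul, Finset.sum_const_zero, Real.log_zero]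
    exact convexOn_const _ convex_univ
  push_neg at hall
  obtain ⟨i₀, hi₀⟩ := hall
  have hpos : ∀ s : ℝ, 0 < ∑ i, c i * Real.exp (θ i * s) := fun s =>
    Finset.sum_pos' (fun i _ => mul_nonneg (hc i) (Real.exp_pos _).le)
      ⟨i₀, Finset.mem_univ _, mul_pos ((hc i₀).lt_of_ne (Ne.symm hi₀)) (Real.exp_pos _)⟩
  refine ⟨convex_univ, fun x _ y _ a b ha hb hab => ?_⟩
  rcases eq_or_lt_of_le ha with rfl | ha'
  · simp only [zero_add] at hab
    subst hab
    simp
  rcases eq_or_lt_of_le hb with rfl | hb'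
  · simp only [add_zero] at hab
    subst hab
    simp
  have hpq := Real.HolderConjugate.inv_inv ha' hb' hab
  have key : ∑ i, c i * Real.exp (θ i * (a • x + b • y)) ≤
      (∑ i, c i * Real.exp (θ i * x)) ^ a * (∑ i, c i * Real.exp (θ i * y)) ^ b := by
    have H := Real.inner_le_Lp_mul_Lq_of_nonneg (Finset.univ (α := ι))
      (f := fun i => (c i * Real.exp (θ i * x)) ^ a)
      (g := fun i => (c i * Real.exp (θ i * y)) ^ b) hpq
      (fun i _ => Real.rpow_nonneg (mul_nonneg (hc i) (Real.exp_pos _).le) _)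
      (fun i _ => Real.rpow_nonneg (mul_nonneg (hc i) (Real.exp_pos _).le) _)
    have e1 : ∀ i : ι, (c i * Real.exp (θ i * x)) ^ a * (c i * Real.exp (θ i * y)) ^ b
        = c i * Real.exp (θ i * (a • x + b • y)) := by
      intro i
      rw [Real.mul_rpow (hc i) (Real.exp_pos _).le, Real.mul_rpow (hc i) (Real.exp_pos _).le,
        ← Real.exp_mul, ← Real.exp_mul]
      rcases eq_or_lt_of_le (hc i) with hci | hci
      · rw [← hci, Real.zero_rpow ha'.ne', Real.zero_rpow hb'.ne']
        ring
      · rw [mul_mul_mul_comm, ← Real.rpow_add hci, hab, Real.rpow_one, ← Real.exp_add]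
        congr 1
        simp only [smul_eq_mul]
        ring
    have e2 : ∀ (z : ℝ) (u : ℝ), 0 < u → 0 ≤ z → (z ^ u) ^ (u⁻¹ : ℝ) = z := by
      intro z u hu hz
      rw [← Real.rpow_mul hz, mul_inv_cancel₀ hu.ne', Real.rpow_one]
    simp only [e1] at H
    calc ∑ i, c i * Real.exp (θ i * (a • x + b • y)) ≤
        (∑ i, ((c i * Real.exp (θ i * x)) ^ a) ^ (a⁻¹ : ℝ)) ^ (1 / (a⁻¹ : ℝ)) *
          (∑ i, ((c i * Real.exp (θ i * y)) ^ b) ^ (b⁻¹ : ℝ)) ^ (1 / (b⁻¹ : ℝ)) := H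
      _ = (∑ i, c i * Real.exp (θ i * x)) ^ a * (∑ i, c i * Real.exp (θ i * y)) ^ b := by
          simp only [fun i => e2 (c i * Real.exp (θ i * x)) a ha'
              (mul_nonneg (hc i) (Real.exp_pos _).le),
            fun i => e2 (c i * Real.exp (θ i * y)) b hb'
              (mul_nonneg (hc i) (Real.exp_pos _).le), one_div, inv_inv]
  have hx := hpos x
  have hy := hpos y
  calc Real.log (∑ i, c i * Real.exp (θ i * (a • x + b • y)))
      ≤ Real.log ((∑ i, c i * Real.exp (θ i * x)) ^ a * (∑ i, c i * Real.exp (θ i * y)) ^ b) :=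
        Real.log_le_log (hpos _) key
    _ = a • Real.log (∑ i, c i * Real.exp (θ i * x)) +
          b • Real.log (∑ i, c i * Real.exp (θ i * y)) := by
        rw [Real.log_mul (Real.rpow_pos_of_pos hx a).ne' (Real.rpow_pos_of_pos hy b).ne',
          Real.log_rpow hx, Real.log_rpow hy]
        simp [smul_eq_mul]

/-- for positive semidefinite `A`, `B` with non-disjoint supports
(so that `Tr(A^{1-s}B^s) > 0` on `(0,1)`), the function
`μ(s) = log Tr(A^{1-s} B^s)` is convex on `(0,1)`. -/
theorem mu_convexOn {d : ℕ} (A B : Matrix (Fin d) (Fin d) ℂ)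
    (hA : A.PosSemidef) (hB : B.PosSemidef)
    (hpos : ∀ s ∈ Set.Ioo (0 : ℝ) 1, 0 < ((mpow A (1 - s) * mpow B s).trace.re)) :
    ConvexOn ℝ (Set.Ioo (0 : ℝ) 1) (mu A B) := by
  classical
  have hAh : A.IsHermitian := hA.1
  have hBh : B.IsHermitian := hB.1
  set α : Fin d → ℝ := hAh.eigenvalues with hα
  set β : Fin d → ℝ := hBh.eigenvalues with hβ
  set U : Matrix (Fin d) (Fin d) ℂ := (Matrix.IsHermitian.eigenvectorUnitary hAh : Matrix (Fin d) (Fin d) ℂ) with hU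
  set V : Matrix (Fin d) (Fin d) ℂ := (Matrix.IsHermitian.eigenvectorUnitary hBh : Matrix (Fin d) (Fin d) ℂ) with hV
  set W : Matrix (Fin d) (Fin d) ℂ := star U * V with hW
  have hαnn : ∀ i, 0 ≤ α i := fun i => hA.eigenvalues_nonneg i
  have hβnn : ∀ i, 0 ≤ β i := fun i => hB.eigenvalues_nonneg i
  -- trace formula
  have hre : ∀ r t : ℝ, (mpow A r * mpow B t).trace.re
      = ∑ i, ∑ j, (α i ^ r) * (β j ^ t) * Complex.normSq (W i j) := by
    intro r t
    have hmA : mpow A r = U * diagonal (fun i => ((α i ^ r : ℝ) : ℂ)) * star U := by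
      rw [mpow, hAh.cfc_eq, Matrix.IsHermitian.cfc]
      rfl
    have hmB : mpow B t = V * diagonal (fun j => ((β j ^ t : ℝ) : ℂ)) * star V := by
      rw [mpow, hBh.cfc_eq, Matrix.IsHermitian.cfc]
      rfl
    set Da := diagonal (fun i => ((α i ^ r : ℝ) : ℂ))
    set Db := diagonal (fun j => ((β j ^ t : ℝ) : ℂ))
    have h1 : (mpow A r * mpow B t).trace = (Da * W * Db * star W).trace := by
      rw [hmA, hmB]
      have : U * Da * star U * (V * Db * star V) = U * (Da * W * Db * star V) := by
        rw [hW]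
        simp only [Matrix.mul_assoc]
      rw [this, Matrix.trace_mul_comm U (Da * W * Db * star V)]
      have : Da * W * Db * star V * U = Da * W * Db * star W := by
        rw [hW, Matrix.star_mul, star_star]
        simp only [Matrix.mul_assoc]
      rw [this]
    rw [h1]
    have hX : Da * W * Db
        = Matrix.of (fun i j => ((α i ^ r : ℝ) : ℂ) * W i j * ((β j ^ t : ℝ) : ℂ)) := by
      ext i j
      rw [Matrix.mul_diagonal, Matrix.diagonal_mul, Matrix.of_apply]
    have h2 : (Da * W * Db * star W).trace
        = ∑ i, ∑ j, ((α i ^ r : ℝ) : ℂ) * ((β j ^ t : ℝ) : ℂ) * (W i j * star (W i j)) := by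
      rw [hX]
      simp only [Matrix.trace, Matrix.diag, Matrix.mul_apply, Matrix.of_apply, Matrix.star_apply]
      refine Finset.sum_congr rfl fun i _ => Finset.sum_congr rfl fun j _ => ?_
      ring
    rw [h2]
    have h3 : (∑ i, ∑ j, ((α i ^ r : ℝ) : ℂ) * ((β j ^ t : ℝ) : ℂ) * (W i j * star (W i j)))
        = ((∑ i, ∑ j, (α i ^ r) * (β j ^ t) * Complex.normSq (W i j) : ℝ) : ℂ) := by
      push_cast
      refine Finset.sum_congr rfl fun i _ => Finset.sum_congr rfl fun j _ => ?_
      rw [Complex.star_def, Complex.mul_conj]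
    rw [h3, Complex.ofReal_re]
  -- set up log-sum-exp data
  set c : Fin d × Fin d → ℝ := fun p =>
    if 0 < α p.1 ∧ 0 < β p.2 then α p.1 * Complex.normSq (W p.1 p.2) else 0 with hcdef
  set θ : Fin d × Fin d → ℝ := fun p => Real.log (β p.2) - Real.log (α p.1) with hθdef
  have hc : ∀ p, 0 ≤ c p := by
    intro p
    rw [hcdef]
    dsimp only
    split
    · exact mul_nonneg (hαnn p.1) (Complex.normSq_nonneg _)
    · exact le_refl 0
  have hconv := (logsumexp_convexOn c θ hc).subset (Set.subset_univ _) (convex_Ioo 0 1)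
  refine hconv.congr fun s hs => ?_
  obtain ⟨hs0, hs1⟩ := hs
  have hterm : ∀ i j, c (i, j) * Real.exp (θ (i, j) * s)
      = (α i ^ (1 - s)) * (β j ^ s) * Complex.normSq (W i j) := by
    intro i j
    rw [hcdef, hθdef]
    dsimp only
    by_cases h : 0 < α i ∧ 0 < β j
    · obtain ⟨hαi, hβj⟩ := h
      rw [if_pos ⟨hαi, hβj⟩]
      have : α i ^ (1 - s) * β j ^ s = α i * Real.exp ((Real.log (β j) - Real.log (α i)) * s) := by
        have hrhs : α i * Real.exp ((Real.log (β j) - Real.log (α i)) * s)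
            = Real.exp (Real.log (α i) + (Real.log (β j) - Real.log (α i)) * s) := by
          rw [Real.exp_add, Real.exp_log hαi]
        rw [hrhs, Real.rpow_def_of_pos hαi, Real.rpow_def_of_pos hβj, ← Real.exp_add]
        congr 1
        ring
      rw [this]
      ring
    · rw [if_neg h]
      rcases not_and_or.mp h with h' | h'
      · have hz : α i = 0 := le_antisymm (not_lt.mp h') (hαnn i)
        rw [hz, Real.zero_rpow (by linarith : (1 : ℝ) - s ≠ 0)]
        ring
      · have hz : β j = 0 := le_antisymm (not_lt.mp h') (hβnn j)
        rw [hz, Real.zero_rpow hs0.ne']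
        ring
  show Real.log (∑ p : Fin d × Fin d, c p * Real.exp (θ p * s)) = mu A B s
  rw [mu, hre (1 - s) s, Fintype.sum_prod_type]
  congr 1
  exact Finset.sum_congr rfl fun i _ => Finset.sum_congr rfl fun j _ => hterm i j
end

section
/- For commuting density matrices (i.e., classical probability distributions W(·|x) on a finite output alphabet Y): for fixed ρ ≥ 0 and probability distribution P on a finite alphabet X, min over probability distributions Q on Y of [−(1+ρ) Σ_x P(x) log Σ_y W(y|x)^{1/(1+ρ)} Q(y)^{ρ/(1+ρ)}] equals min over channels V : X → distributions on Y of [D(V‖W|P) + ρ·I(P,V)], where D(V‖W|P) = Σ_{x,y} P(x)V(y|x) log(V(y|x)/W(y|x)) and I(P,V) is the mutual information. -/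
/-! Both sides are the minimum over pairs `(V, Q)` of `D(V‖W|P) + ρ·D(V‖Q|P)`, where `D(V‖Q|P)` is the
conditional divergence from the constant channel `Q`. For fixed `V`, the minimum over `Q` is the
mutual information `I(P,V)`, attained at the output distribution `PV`. For fixed `Q`, the objective
equals `(1+ρ) Σ_x P(x) D(V(·|x) ‖ W(·|x)^{1/(1+ρ)} Q^{ρ/(1+ρ)})` (with an unnormalised second
argument), and Gibbs' inequality bounds it below by the Gallager expression, with equality at the
tilted channel `V(y|x) ∝ W(y|x)^{1/(1+ρ)} Q(y)^{ρ/(1+ρ)}`. -/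

open Finset

variable {X Y : Type*} [Fintype X] [Fintype Y]

/-- A probability distribution on a finite set. -/
def IsProb {Z : Type*} [Fintype Z] (P : Z → ℝ) : Prop :=
  (∀ z, 0 ≤ P z) ∧ ∑ z, P z = 1

/-- A channel (stochastic matrix) from `X` to `Y`. -/
def IsChannel (V : X → Y → ℝ) : Prop :=
  ∀ x, IsProb (V x)

/-- Conditional Kullback–Leibler divergence `D(V‖W|P)`. -/
noncomputable def condKL (P : X → ℝ) (V W : X → Y → ℝ) : ℝ :=
  ∑ x, ∑ y, P x * V x y * Real.log (V x y / W x y)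

/-- Mutual information `I(P,V)`. -/
noncomputable def mutInf (P : X → ℝ) (V : X → Y → ℝ) : ℝ :=
  ∑ x, ∑ y, P x * V x y * Real.log (V x y / ∑ x', P x' * V x' y)

open Real

theorem ciInf_eq_of_forall_exists_le {α : Type*} [ConditionallyCompleteLattice α] {ι ι' : Sort*}
    [Nonempty ι] [Nonempty ι'] {f : ι → α} {g : ι' → α} (hf : BddBelow (Set.range f))
    (hfg : ∀ i', ∃ i, f i ≤ g i') (hgf : ∀ i, ∃ i', g i' ≤ f i) : ⨅ i, f i = ⨅ i', g i' := by
  have hg : BddBelow (Set.range g) := by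
    obtain ⟨m, hm⟩ := hf
    refine ⟨m, Set.forall_mem_range.2 fun i' => ?_⟩
    obtain ⟨i, hi⟩ := hfg i'
    exact (hm (Set.mem_range_self i)).trans hi
  exact le_antisymm (ciInf_mono_of_forall_exists hf hfg) (ciInf_mono_of_forall_exists hg hgf)

section Gibbs

variable {Z : Type*} [Fintype Z]

theorem IsProb.exists_pos {v : Z → ℝ} (hv : IsProb v) : ∃ z, 0 < v z := by
  obtain ⟨z, -, hz⟩ := exists_ne_zero_of_sum_ne_zero (hv.2.symm ▸ one_ne_zero : ∑ z, v z ≠ 0)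
  exact ⟨z, (hv.1 z).lt_of_ne' hz⟩

theorem isProb_uniform [Nonempty Z] : IsProb fun _ : Z => (Fintype.card Z : ℝ)⁻¹ :=
  ⟨fun _ => by positivity, by simp⟩

theorem sub_le_mul_log_div {v c : ℝ} (hv : 0 ≤ v) (hc : 0 < c) : v - c ≤ v * log (v / c) := by
  rcases hv.eq_or_lt with rfl | hv
  · simpa using hc.le
  · calc v - c = v * (1 - (v / c)⁻¹) := by field_simp
      _ ≤ v * log (v / c) := by gcongr; exact one_sub_inv_le_log_of_pos (by positivity)

theorem neg_log_sum_le_sum_mul_log_div {v b : Z → ℝ} (hv : IsProb v) (hb : ∀ z, 0 ≤ b z)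
    (hvb : ∀ z, b z = 0 → v z = 0) (hS : 0 < ∑ z, b z) :
    -log (∑ z, b z) ≤ ∑ z, v z * log (v z / b z) := by
  set S := ∑ z, b z
  have key : ∀ z, v z - b z / S ≤ v z * log (v z / b z) + v z * log S := by
    intro z
    rcases (hv.1 z).eq_or_lt with hvz | hvz
    · rw [← hvz, zero_sub, zero_mul, zero_mul, add_zero, neg_nonpos]
      exact div_nonneg (hb z) hS.le
    · have hbz : 0 < b z := (hb z).lt_of_ne' fun h => hvz.ne' (hvb z h)
      calc v z - b z / S ≤ v z * log (v z / (b z / S)) := sub_le_mul_log_div hvz.le (by positivity)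
        _ = v z * log (v z / b z) + v z * log S := by
          rw [div_div_eq_mul_div, mul_div_right_comm, log_mul (by positivity) hS.ne', mul_add]
  have hsum := sum_le_sum fun z (_ : z ∈ univ) => key z
  rw [sum_sub_distrib, ← sum_div, div_self hS.ne', sum_add_distrib, ← sum_mul, hv.2] at hsum
  linarith

theorem sum_mul_log_div_eq_neg_log_sum {v b : Z → ℝ} (hv : ∀ z, v z = b z / ∑ z', b z')
    (hS : 0 < ∑ z, b z) : ∑ z, v z * log (v z / b z) = -log (∑ z, b z) := by
  have hterm : ∀ z, v z * log (v z / b z) = b z / (∑ z', b z') * -log (∑ z, b z) := by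
    intro z
    rw [hv]
    rcases eq_or_ne (b z) 0 with hbz | hbz
    · simp [hbz]
    · rw [div_div_cancel_left' hbz, log_inv]
  rw [sum_congr rfl fun z _ => hterm z, ← sum_mul, ← sum_div, div_self hS.ne', one_mul]

end Gibbs

theorem mul_log_div_add_mul_mul_log_div {ρ v w q : ℝ} (hρ : 0 ≤ ρ) (hv : 0 ≤ v) (hw : 0 < w)
    (hq : 0 ≤ q) (hvq : 0 < ρ → q = 0 → v = 0) :
    v * log (v / w) + ρ * (v * log (v / q)) =
      (1 + ρ) * (v * log (v / (w ^ (1 / (1 + ρ)) * q ^ (ρ / (1 + ρ))))) := by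
  rcases hv.eq_or_lt with rfl | hv
  · simp
  rcases hρ.eq_or_lt with rfl | hρ
  · norm_num
  have hq : 0 < q := hq.lt_of_ne' fun h => hv.ne' (hvq hρ h)
  rw [log_div hv.ne' hw.ne', log_div hv.ne' hq.ne', log_div hv.ne' (by positivity),
    log_mul (by positivity) (by positivity), log_rpow hw, log_rpow hq]
  field_simp
  ring

noncomputable def gallagerWeight (W : X → Y → ℝ) (ρ : ℝ) (Q : Y → ℝ) (x : X) (y : Y) : ℝ :=
  W x y ^ (1 / (1 + ρ)) * Q y ^ (ρ / (1 + ρ))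

noncomputable def gallagerE0 (W : X → Y → ℝ) (P : X → ℝ) (ρ : ℝ) (Q : Y → ℝ) : ℝ :=
  -(1 + ρ) * ∑ x, P x * log (∑ y, gallagerWeight W ρ Q x y)

noncomputable def tiltedChannel (W : X → Y → ℝ) (ρ : ℝ) (Q : Y → ℝ) (x : X) (y : Y) : ℝ :=
  gallagerWeight W ρ Q x y / ∑ y', gallagerWeight W ρ Q x y'

def outputDist (P : X → ℝ) (V : X → Y → ℝ) (y : Y) : ℝ :=
  ∑ x, P x * V x y

section Channels

variable {W V : X → Y → ℝ} {P : X → ℝ} {Q : Y → ℝ} {ρ : ℝ}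

omit [Fintype Y] in
theorem mul_le_outputDist (hP : ∀ x, 0 ≤ P x) (hV : ∀ x y, 0 ≤ V x y) (x : X) (y : Y) :
    P x * V x y ≤ outputDist P V y :=
  single_le_sum (f := fun x => P x * V x y) (fun i _ => mul_nonneg (hP i) (hV i y)) (mem_univ x)

theorem isProb_outputDist (hP : IsProb P) (hV : IsChannel V) : IsProb (outputDist P V) := by
  refine ⟨fun y => sum_nonneg fun x _ => mul_nonneg (hP.1 x) ((hV x).1 y), ?_⟩
  simp only [outputDist]
  rw [sum_comm]
  simp [← mul_sum, (hV _).2, hP.2]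

omit [Fintype X] [Fintype Y] in
theorem gallagerWeight_nonneg {x : X} {y : Y} (hW : 0 ≤ W x y) (hQ : 0 ≤ Q y) :
    0 ≤ gallagerWeight W ρ Q x y :=
  mul_nonneg (rpow_nonneg hW _) (rpow_nonneg hQ _)

omit [Fintype X] [Fintype Y] in
theorem gallagerWeight_eq_zero_iff (hρ : 0 ≤ ρ) {x : X} {y : Y} (hW : 0 < W x y) (hQ : 0 ≤ Q y) :
    gallagerWeight W ρ Q x y = 0 ↔ 0 < ρ ∧ Q y = 0 := by
  have h1ρ : 0 < 1 + ρ := by linarith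
  rw [gallagerWeight, mul_eq_zero, rpow_eq_zero_iff_of_nonneg hW.le,
    rpow_eq_zero_iff_of_nonneg hQ, div_ne_zero_iff, hρ.lt_iff_ne']
  simp [hW.ne', h1ρ.ne', and_comm]

omit [Fintype X] in
theorem sum_gallagerWeight_pos (hρ : 0 ≤ ρ) (hW : ∀ x y, 0 < W x y) (hQ : IsProb Q) (x : X) :
    0 < ∑ y, gallagerWeight W ρ Q x y := by
  obtain ⟨y, hy⟩ := hQ.exists_pos
  refine sum_pos' (fun y _ => gallagerWeight_nonneg (hW x y).le (hQ.1 y)) ⟨y, mem_univ y, ?_⟩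
  refine (gallagerWeight_nonneg (hW x y).le hy.le).lt_of_ne' fun h => ?_
  exact hy.ne' ((gallagerWeight_eq_zero_iff hρ (hW x y) hy.le).1 h).2

omit [Fintype X] in
theorem sum_gallagerWeight_le_one (hρ : 0 ≤ ρ) {x : X} (hW : IsProb (W x)) (hQ : IsProb Q) :
    ∑ y, gallagerWeight W ρ Q x y ≤ 1 := by
  have hαβ : 1 / (1 + ρ) + ρ / (1 + ρ) = 1 := by field_simp
  calc ∑ y, gallagerWeight W ρ Q x y ≤ ∑ y, (1 / (1 + ρ) * W x y + ρ / (1 + ρ) * Q y) :=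
        sum_le_sum fun y _ => geom_mean_le_arith_mean2_weighted (by positivity) (by positivity)
          (hW.1 y) (hQ.1 y) hαβ
    _ = 1 := by rw [sum_add_distrib, ← mul_sum, ← mul_sum, hW.2, hQ.2, mul_one, mul_one, hαβ]

theorem gallagerE0_nonneg (hW : IsChannel W) (hP : IsProb P) (hρ : 0 ≤ ρ) (hQ : IsProb Q) :
    0 ≤ gallagerE0 W P ρ Q := by
  refine mul_nonneg_of_nonpos_of_nonpos (by linarith) (sum_nonpos fun x _ => ?_)
  refine mul_nonpos_of_nonneg_of_nonpos (hP.1 x) (log_nonpos ?_ (sum_gallagerWeight_le_one hρ (hW x) hQ))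
  exact sum_nonneg fun y _ => gallagerWeight_nonneg ((hW x).1 y) (hQ.1 y)

omit [Fintype X] in
theorem isChannel_tiltedChannel (hρ : 0 ≤ ρ) (hW : ∀ x y, 0 < W x y) (hQ : IsProb Q) :
    IsChannel (tiltedChannel W ρ Q) := fun x =>
  ⟨fun y => div_nonneg (gallagerWeight_nonneg (hW x y).le (hQ.1 y))
    (sum_gallagerWeight_pos hρ hW hQ x).le,
   by simp only [tiltedChannel, ← sum_div, div_self (sum_gallagerWeight_pos hρ hW hQ x).ne']⟩

omit [Fintype X] in
theorem tiltedChannel_eq_zero (hρ : 0 < ρ) {x : X} {y : Y} (hQ : Q y = 0) :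
    tiltedChannel W ρ Q x y = 0 := by
  rw [tiltedChannel, gallagerWeight, hQ, zero_rpow (by positivity), mul_zero, zero_div]

theorem condKL_add_mul_condKL_const (hρ : 0 ≤ ρ) (hW : ∀ x y, 0 < W x y) (hQ : ∀ y, 0 ≤ Q y)
    (hV : ∀ x y, 0 ≤ V x y) (hVQ : 0 < ρ → ∀ x y, Q y = 0 → P x * V x y = 0) :
    condKL P V W + ρ * condKL P V (fun _ => Q) =
      (1 + ρ) * ∑ x, P x * ∑ y, V x y * log (V x y / gallagerWeight W ρ Q x y) := by
  simp only [condKL, mul_sum, ← sum_add_distrib]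
  refine sum_congr rfl fun x _ => sum_congr rfl fun y _ => ?_
  by_cases hPx : P x = 0
  · simp [hPx]
  have := mul_log_div_add_mul_mul_log_div hρ (hV x y) (hW x y) (hQ y)
    fun hρ hQy => (mul_eq_zero.1 (hVQ hρ x y hQy)).resolve_left hPx
  rw [gallagerWeight]
  linear_combination P x * this

theorem gallagerE0_le_condKL_add_mul_condKL_const (hP : IsProb P) (hV : IsChannel V)
    (hρ : 0 ≤ ρ) (hW : ∀ x y, 0 < W x y) (hQ : IsProb Q)
    (hVQ : 0 < ρ → ∀ x y, Q y = 0 → P x * V x y = 0) :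
    gallagerE0 W P ρ Q ≤ condKL P V W + ρ * condKL P V (fun _ => Q) := by
  rw [condKL_add_mul_condKL_const hρ hW hQ.1 (fun x => (hV x).1) hVQ, gallagerE0, neg_mul,
    ← mul_neg, ← sum_neg_distrib]
  refine mul_le_mul_of_nonneg_left (sum_le_sum fun x _ => ?_) (by linarith)
  rcases (hP.1 x).eq_or_lt with hPx | hPx
  · simp [← hPx]
  rw [← mul_neg]
  refine mul_le_mul_of_nonneg_left (neg_log_sum_le_sum_mul_log_div (hV x)
    (fun y => gallagerWeight_nonneg (hW x y).le (hQ.1 y)) (fun y hy => ?_)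
    (sum_gallagerWeight_pos hρ hW hQ x)) hPx.le
  obtain ⟨hρ, hQy⟩ := (gallagerWeight_eq_zero_iff hρ (hW x y) (hQ.1 y)).1 hy
  exact (mul_eq_zero.1 (hVQ hρ x y hQy)).resolve_left hPx.ne'

theorem condKL_tiltedChannel_add_eq_gallagerE0 (hρ : 0 ≤ ρ) (hW : ∀ x y, 0 < W x y)
    (hQ : IsProb Q) :
    condKL P (tiltedChannel W ρ Q) W + ρ * condKL P (tiltedChannel W ρ Q) (fun _ => Q) =
      gallagerE0 W P ρ Q := by
  rw [condKL_add_mul_condKL_const hρ hW hQ.1 (fun x => (isChannel_tiltedChannel hρ hW hQ x).1)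
    fun hρ x y hQy => by rw [tiltedChannel_eq_zero hρ hQy, mul_zero]]
  rw [gallagerE0, neg_mul, ← mul_neg, ← sum_neg_distrib]
  congr 1
  refine sum_congr rfl fun x _ => ?_
  rw [sum_mul_log_div_eq_neg_log_sum (v := tiltedChannel W ρ Q x) (fun y => rfl)
    (sum_gallagerWeight_pos hρ hW hQ x), mul_neg]

theorem mutInf_le_condKL_const (hP : IsProb P) (hV : IsChannel V) (hQ : IsProb Q)
    (hVQ : ∀ x y, Q y = 0 → P x * V x y = 0) : mutInf P V ≤ condKL P V (fun _ => Q) := by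
  set O := outputDist P V
  have hO : IsProb O := isProb_outputDist hP hV
  have hsplit : ∀ x y, P x * V x y * log (V x y / Q y) =
      P x * V x y * log (V x y / O y) + P x * V x y * log (O y / Q y) := by
    intro x y
    by_cases hPV : P x * V x y = 0
    · simp [hPV]
    have hOy : O y ≠ 0 := ((mul_nonneg (hP.1 x) ((hV x).1 y)).lt_of_ne' hPV).trans_le
      (mul_le_outputDist hP.1 (fun x => (hV x).1) x y) |>.ne'
    have hQy : Q y ≠ 0 := fun h => hPV (hVQ x y h)
    rw [log_div (right_ne_zero_of_mul hPV) hQy, log_div (right_ne_zero_of_mul hPV) hOy,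
      log_div hOy hQy]
    ring
  have hdiv : 0 ≤ ∑ y, O y * log (O y / Q y) := by
    have := neg_log_sum_le_sum_mul_log_div hO hQ.1
      (fun y hy => sum_eq_zero fun x _ => hVQ x y hy) (by rw [hQ.2]; exact one_pos)
    rwa [hQ.2, log_one, neg_zero] at this
  have hcond : condKL P V (fun _ => Q) = mutInf P V + ∑ y, O y * log (O y / Q y) := by
    simp only [condKL, hsplit, sum_add_distrib]
    rw [sum_comm (f := fun x y => P x * V x y * log (O y / Q y))]
    simp only [← sum_mul]
    rfl
  linarith

theorem gallagerE0_outputDist_le (hP : IsProb P) (hV : IsChannel V) (hρ : 0 ≤ ρ)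
    (hW : ∀ x y, 0 < W x y) : gallagerE0 W P ρ (outputDist P V) ≤ condKL P V W + ρ * mutInf P V :=
  gallagerE0_le_condKL_add_mul_condKL_const hP hV hρ hW (isProb_outputDist hP hV)
    fun _ x y hO => le_antisymm (hO ▸ mul_le_outputDist hP.1 (fun x => (hV x).1) x y)
      (mul_nonneg (hP.1 x) ((hV x).1 y))

theorem condKL_tiltedChannel_add_mul_mutInf_le (hP : IsProb P) (hρ : 0 ≤ ρ)
    (hW : ∀ x y, 0 < W x y) (hQ : IsProb Q) :
    condKL P (tiltedChannel W ρ Q) W + ρ * mutInf P (tiltedChannel W ρ Q) ≤ gallagerE0 W P ρ Q := by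
  rw [← condKL_tiltedChannel_add_eq_gallagerE0 (P := P) hρ hW hQ]
  rcases hρ.eq_or_lt with rfl | hρ'
  · simp
  gcongr
  exact mutInf_le_condKL_const hP (isChannel_tiltedChannel hρ hW hQ) hQ
    fun x y hQy => by rw [tiltedChannel_eq_zero hρ' hQy, mul_zero]

end Channels

theorem E0cc_eq_min_KL_form_general [Nonempty Y]
    (W : X → Y → ℝ) (hW : IsChannel W) (hWpos : ∀ x y, 0 < W x y)
    (P : X → ℝ) (hP : IsProb P) (ρ : ℝ) (hρ : 0 ≤ ρ) :
    (⨅ Q : {Q : Y → ℝ // IsProb Q},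
      -(1 + ρ) * ∑ x, P x *
        Real.log (∑ y, W x y ^ (1 / (1 + ρ)) * (Q.1 y) ^ (ρ / (1 + ρ)))) =
    (⨅ V : {V : X → Y → ℝ // IsChannel V},
      condKL P V.1 W + ρ * mutInf P V.1) := by
  have : Nonempty {Q : Y → ℝ // IsProb Q} := ⟨⟨_, isProb_uniform⟩⟩
  have : Nonempty {V : X → Y → ℝ // IsChannel V} :=
    ⟨⟨fun _ _ => (Fintype.card Y : ℝ)⁻¹, fun _ => isProb_uniform⟩⟩
  refine ciInf_eq_of_forall_exists_le (f := fun Q : {Q // IsProb Q} => gallagerE0 W P ρ Q.1)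
    ⟨0, ?_⟩ (fun V => ?_) (fun Q => ?_)
  · rintro _ ⟨Q, rfl⟩
    exact gallagerE0_nonneg hW hP hρ Q.2
  · exact ⟨⟨_, isProb_outputDist hP V.2⟩, gallagerE0_outputDist_le hP V.2 hρ hWpos⟩
  · exact ⟨⟨_, isChannel_tiltedChannel hρ hWpos Q.2⟩,
      condKL_tiltedChannel_add_mul_mutInf_le hP hρ hWpos Q.2⟩

/-- for a classical channel `W` with `W(y|x) > 0`, a distribution `P`
and `ρ ≥ 0`, the Gallager-type expression
`min_Q [−(1+ρ) Σ_x P(x) log Σ_y W(y|x)^{1/(1+ρ)} Q(y)^{ρ/(1+ρ)}]` equals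
`min_V [D(V‖W|P) + ρ·I(P,V)]`. -/
theorem E0cc_eq_min_KL_form [Nonempty X] [Nonempty Y]
    (W : X → Y → ℝ) (hW : IsChannel W) (hWpos : ∀ x y, 0 < W x y)
    (P : X → ℝ) (hP : IsProb P) (ρ : ℝ) (hρ : 0 ≤ ρ) :
    (⨅ Q : {Q : Y → ℝ // IsProb Q},
      -(1 + ρ) * ∑ x, P x *
        Real.log (∑ y, W x y ^ (1 / (1 + ρ)) * (Q.1 y) ^ (ρ / (1 + ρ)))) =
    (⨅ V : {V : X → Y → ℝ // IsChannel V},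
      condKL P V.1 W + ρ * mutInf P V.1) :=
  E0cc_eq_min_KL_form_general W hW hWpos P hP ρ hρ
end

section
/- For a classical channel W with W(y|x) > 0 and distribution P: sup_{ρ≥0} [min_V (D(V‖W|P) + ρ I(P,V)) − ρR] = min_{V : I(P,V) ≤ R} D(V‖W|P), for every R > 0. -/
/-!
Write `F t = min {D(V‖W|P) : I(P,V) ≤ t}`. Both `D(·‖W|P)` and `I(P,·)` are convex in the channel
(log-sum inequality), so mixing near-optimal channels shows that `F` is convex on `[0, ∞)`; it is
also nonincreasing. As `R > 0` is interior, `F` has a supporting line at `R` of slope `-ρ ≤ 0`, and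
then `D(V‖W|P) + ρ I(P,V) ≥ F (I(P,V)) + ρ I(P,V) ≥ F R + ρ R` for every channel `V`: the supremum
is attained at this `ρ`. The reverse inequality is weak duality.
-/

open Finset

variable {X Y : Type*} [Fintype X] [Fintype Y]

open Real Set

lemma sub_le_mul_log_div_s5 {a b : ℝ} (ha : 0 ≤ a) (hb : 0 ≤ b) (hab : b = 0 → a = 0) :
    a - b ≤ a * log (a / b) := by
  rcases hb.eq_or_lt with rfl | hb
  · simp [hab rfl]
  rcases ha.eq_or_lt with rfl | ha
  · simpa using hb.le
  have := one_sub_inv_le_log_of_pos (div_pos ha hb)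
  rw [inv_div] at this
  calc a - b = a * (1 - b / a) := by field_simp
    _ ≤ a * log (a / b) := by gcongr

lemma mul_log_div_mul_left (c a b : ℝ) :
    c * a * log (c * a / (c * b)) = c * (a * log (a / b)) := by
  rcases eq_or_ne c 0 with rfl | hc
  · simp
  · rw [mul_div_mul_left a b hc, mul_assoc]

lemma sum_mul_log_div_nonneg {ι : Type*} [Fintype ι] {a b : ι → ℝ} (ha : 0 ≤ a) (hb : 0 ≤ b)
    (hab : ∀ i, b i = 0 → a i = 0) (hsum : ∑ i, b i ≤ ∑ i, a i) :
    0 ≤ ∑ i, a i * log (a i / b i) :=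
  calc 0 ≤ ∑ i, (a i - b i) := by rw [sum_sub_distrib]; linarith
    _ ≤ ∑ i, a i * log (a i / b i) :=
      sum_le_sum fun i _ => sub_le_mul_log_div_s5 (ha i) (hb i) (hab i)

lemma mul_log_div_add_le {a₁ a₂ b₁ b₂ : ℝ} (ha₁ : 0 ≤ a₁) (ha₂ : 0 ≤ a₂) (hb₁ : 0 ≤ b₁)
    (hb₂ : 0 ≤ b₂) (h₁ : b₁ = 0 → a₁ = 0) (h₂ : b₂ = 0 → a₂ = 0) :
    (a₁ + a₂) * log ((a₁ + a₂) / (b₁ + b₂)) ≤ a₁ * log (a₁ / b₁) + a₂ * log (a₂ / b₂) := by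
  rcases hb₁.eq_or_lt with rfl | hb₁
  · simp [h₁ rfl]
  rcases hb₂.eq_or_lt with rfl | hb₂
  · simp [h₂ rfl]
  have hb : 0 < b₁ + b₂ := by positivity
  -- convexity of `u ↦ u log u` at the points `aᵢ / bᵢ` with weights `bᵢ / (b₁ + b₂)`
  have key := convexOn_mul_log.2 (mem_Ici.2 (div_nonneg ha₁ hb₁.le))
    (mem_Ici.2 (div_nonneg ha₂ hb₂.le)) (div_nonneg hb₁.le hb.le) (div_nonneg hb₂.le hb.le)
    (by field_simp)
  have hpt : b₁ / (b₁ + b₂) * (a₁ / b₁) + b₂ / (b₁ + b₂) * (a₂ / b₂) = (a₁ + a₂) / (b₁ + b₂) := by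
    field_simp
  simp only [smul_eq_mul, hpt] at key
  calc (a₁ + a₂) * log ((a₁ + a₂) / (b₁ + b₂))
      = (b₁ + b₂) * ((a₁ + a₂) / (b₁ + b₂) * log ((a₁ + a₂) / (b₁ + b₂))) := by
        rw [← mul_assoc, mul_div_cancel₀ _ hb.ne']
    _ ≤ (b₁ + b₂) * (b₁ / (b₁ + b₂) * (a₁ / b₁ * log (a₁ / b₁)) +
          b₂ / (b₁ + b₂) * (a₂ / b₂ * log (a₂ / b₂))) := by gcongr
    _ = a₁ * log (a₁ / b₁) + a₂ * log (a₂ / b₂) := by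
        simp only [mul_add, ← mul_assoc, mul_div_cancel₀ _ hb.ne', mul_div_cancel₀ _ hb₁.ne',
          mul_div_cancel₀ _ hb₂.ne']

lemma mul_log_div_convex_comb {s t a₁ a₂ b₁ b₂ : ℝ} (hs : 0 ≤ s) (ht : 0 ≤ t) (ha₁ : 0 ≤ a₁)
    (ha₂ : 0 ≤ a₂) (hb₁ : 0 ≤ b₁) (hb₂ : 0 ≤ b₂) (h₁ : b₁ = 0 → a₁ = 0) (h₂ : b₂ = 0 → a₂ = 0) :
    (s * a₁ + t * a₂) * log ((s * a₁ + t * a₂) / (s * b₁ + t * b₂)) ≤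
      s * (a₁ * log (a₁ / b₁)) + t * (a₂ * log (a₂ / b₂)) := by
  rw [← mul_log_div_mul_left s, ← mul_log_div_mul_left t]
  refine mul_log_div_add_le (by positivity) (by positivity) (by positivity) (by positivity) ?_ ?_
  · intro h; rcases mul_eq_zero.1 h with h | h <;> simp [h, h₁]
  · intro h; rcases mul_eq_zero.1 h with h | h <;> simp [h, h₂]

lemma ConvexOn.add_rightDeriv_mul_sub_le {S : Set ℝ} {f : ℝ → ℝ} {x y : ℝ} (hf : ConvexOn ℝ S f)
    (hx : x ∈ interior S) (hy : y ∈ S) :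
    f x + derivWithin f (Ioi x) x * (y - x) ≤ f y := by
  rcases lt_trichotomy x y with hxy | rfl | hyx
  · have := hf.rightDeriv_le_slope_of_mem_interior hx hy hxy
    rw [slope_def_field, le_div_iff₀ (sub_pos.2 hxy)] at this
    linarith
  · simp
  · have := (hf.slope_le_leftDeriv_of_mem_interior hy hx hyx).trans
      (hf.leftDeriv_le_rightDeriv_of_mem_interior hx)
    rw [slope_def_field, div_le_iff₀ (sub_pos.2 hyx)] at this
    linarith

section

variable {P : X → ℝ} {V W : X → Y → ℝ}

omit [Fintype X] in
lemma IsChannel.nonneg (hV : IsChannel V) : 0 ≤ V := fun x y => (hV x).1 y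

omit [Fintype X] in
lemma convex_setOf_isChannel : Convex ℝ {V : X → Y → ℝ | IsChannel V} := by
  intro V₁ h₁ V₂ h₂ s t hs ht hst x
  refine ⟨fun y => ?_, ?_⟩
  · have := (h₁ x).1 y
    have := (h₂ x).1 y
    simp only [Pi.add_apply, Pi.smul_apply, smul_eq_mul]
    positivity
  · simp only [Pi.add_apply, Pi.smul_apply, smul_eq_mul, sum_add_distrib, ← mul_sum, (h₁ x).2,
      (h₂ x).2, mul_one, hst]

lemma sum_sum_mul_eq_one (hP : IsProb P) (hV : IsChannel V) : ∑ x, ∑ y, P x * V x y = 1 := by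
  simp only [← mul_sum, fun x => (hV x).2, mul_one, hP.2]

lemma isProb_outputDist_s5 (hP : IsProb P) (hV : IsChannel V) :
    IsProb fun y => ∑ x, P x * V x y :=
  ⟨fun y => sum_nonneg fun x _ => mul_nonneg (hP.1 x) ((hV x).1 y),
    by rw [sum_comm]; exact sum_sum_mul_eq_one hP hV⟩

omit [Fintype Y] in
lemma mul_eq_zero_of_outputDist_eq_zero (hP : ∀ x, 0 ≤ P x) (hV : 0 ≤ V) {y : Y}
    (h : ∑ x', P x' * V x' y = 0) (x : X) : P x * V x y = 0 :=
  (sum_eq_zero_iff_of_nonneg fun x' _ => mul_nonneg (hP x') (hV x' y)).1 h x (mem_univ x)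

lemma mutInf_const (hP : ∑ x, P x = 1) (Q : Y → ℝ) : mutInf P (fun _ => Q) = 0 := by
  simp [mutInf, ← sum_mul, hP]

lemma condKL_nonneg (hP : IsProb P) (hV : IsChannel V) (hW : IsChannel W)
    (hWpos : ∀ x y, 0 < W x y) : 0 ≤ condKL P V W := by
  have h := sum_mul_log_div_nonneg (a := fun p : X × Y => P p.1 * V p.1 p.2)
    (b := fun p => P p.1 * W p.1 p.2) (fun p => mul_nonneg (hP.1 _) (hV.nonneg _ _))
    (fun p => mul_nonneg (hP.1 _) (hW.nonneg _ _))
    (fun p h => by simp [(mul_eq_zero.1 h).resolve_right (hWpos _ _).ne'])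
    (by simp only [Fintype.sum_prod_type, sum_sum_mul_eq_one hP hV, sum_sum_mul_eq_one hP hW,
      le_refl])
  simpa only [condKL, Fintype.sum_prod_type, mul_log_div_mul_left, ← mul_assoc] using h

lemma mutInf_nonneg (hP : IsProb P) (hV : IsChannel V) : 0 ≤ mutInf P V := by
  have hq := isProb_outputDist_s5 hP hV
  have h := sum_mul_log_div_nonneg (a := fun p : X × Y => P p.1 * V p.1 p.2)
    (b := fun p => P p.1 * ∑ x', P x' * V x' p.2) (fun p => mul_nonneg (hP.1 _) (hV.nonneg _ _))
    (fun p => mul_nonneg (hP.1 _) (hq.1 _))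
    (fun p h => by
      rcases mul_eq_zero.1 h with h | h
      · simp [h]
      · exact mul_eq_zero_of_outputDist_eq_zero hP.1 hV.nonneg h _)
    (by simp only [Fintype.sum_prod_type, sum_sum_mul_eq_one hP hV,
      sum_sum_mul_eq_one hP (fun _ => hq), le_refl])
  simpa only [mutInf, Fintype.sum_prod_type, mul_log_div_mul_left, ← mul_assoc] using h

lemma convexOn_condKL (hP : ∀ x, 0 ≤ P x) (hWpos : ∀ x y, 0 < W x y) :
    ConvexOn ℝ (Ici 0) fun V => condKL P V W := by
  refine ⟨convex_Ici 0, fun V₁ hV₁ V₂ hV₂ s t hs ht hst => ?_⟩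
  simp only [condKL, Pi.add_apply, Pi.smul_apply, smul_eq_mul, mul_sum, ← sum_add_distrib]
  gcongr with x _ y _
  have hW : s * W x y + t * W x y = W x y := by rw [← add_mul, hst, one_mul]
  have key := mul_log_div_convex_comb hs ht (hV₁ x y) (hV₂ x y) (hWpos x y).le (hWpos x y).le
    (fun h => absurd h (hWpos x y).ne') (fun h => absurd h (hWpos x y).ne')
  rw [hW] at key
  calc P x * (s * V₁ x y + t * V₂ x y) * log ((s * V₁ x y + t * V₂ x y) / W x y)
      = P x * ((s * V₁ x y + t * V₂ x y) * log ((s * V₁ x y + t * V₂ x y) / W x y)) := by ring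
    _ ≤ P x * (s * (V₁ x y * log (V₁ x y / W x y)) + t * (V₂ x y * log (V₂ x y / W x y))) := by
      gcongr; exact hP x
    _ = _ := by ring

lemma convexOn_mutInf (hP : ∀ x, 0 ≤ P x) : ConvexOn ℝ (Ici (0 : X → Y → ℝ)) (mutInf P) := by
  refine ⟨convex_Ici 0, fun V₁ hV₁ V₂ hV₂ s t hs ht hst => ?_⟩
  simp only [mutInf, Pi.add_apply, Pi.smul_apply, smul_eq_mul, mul_sum, ← sum_add_distrib]
  gcongr with x _ y _
  set q₁ := ∑ x', P x' * V₁ x' y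
  set q₂ := ∑ x', P x' * V₂ x' y
  have hq : ∑ x', P x' * (s * V₁ x' y + t * V₂ x' y) = s * q₁ + t * q₂ := by
    simp only [q₁, q₂, mul_sum, ← sum_add_distrib]
    exact sum_congr rfl fun _ _ => by ring
  rw [hq]
  rcases (hP x).eq_or_lt with hPx | hPx
  · simp [← hPx]
  have hq_zero (V : X → Y → ℝ) (hV : 0 ≤ V) : ∑ x', P x' * V x' y = 0 → V x y = 0 := fun h =>
    (mul_eq_zero.1 (mul_eq_zero_of_outputDist_eq_zero hP hV h x)).resolve_left hPx.ne'
  have key := mul_log_div_convex_comb hs ht (hV₁ x y) (hV₂ x y)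
    (sum_nonneg fun x' _ => mul_nonneg (hP x') (hV₁ x' y))
    (sum_nonneg fun x' _ => mul_nonneg (hP x') (hV₂ x' y)) (hq_zero V₁ hV₁) (hq_zero V₂ hV₂)
  calc P x * (s * V₁ x y + t * V₂ x y) * log ((s * V₁ x y + t * V₂ x y) / (s * q₁ + t * q₂))
      = P x * ((s * V₁ x y + t * V₂ x y) * log ((s * V₁ x y + t * V₂ x y) / (s * q₁ + t * q₂))) := by
        ring
    _ ≤ P x * (s * (V₁ x y * log (V₁ x y / q₁)) + t * (V₂ x y * log (V₂ x y / q₂))) := by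
      gcongr
    _ = _ := by ring

noncomputable def minCondKL (P : X → ℝ) (W : X → Y → ℝ) (t : ℝ) : ℝ :=
  ⨅ V : {V : X → Y → ℝ // IsChannel V ∧ mutInf P V ≤ t}, condKL P V.1 W

noncomputable def lagrangian (P : X → ℝ) (W : X → Y → ℝ) (ρ : ℝ) : ℝ :=
  ⨅ V : {V : X → Y → ℝ // IsChannel V}, condKL P V.1 W + ρ * mutInf P V.1

lemma exists_isChannel_mutInf_eq_zero (hP : IsProb P) (hW : IsChannel W) :
    ∃ V : X → Y → ℝ, IsChannel V ∧ mutInf P V = 0 :=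
  ⟨fun _ y => ∑ x, P x * W x y, fun _ => isProb_outputDist_s5 hP hW, mutInf_const hP.2 _⟩

lemma nonempty_mutInf_le (hP : IsProb P) (hW : IsChannel W) {t : ℝ} (ht : 0 ≤ t) :
    Nonempty {V : X → Y → ℝ // IsChannel V ∧ mutInf P V ≤ t} :=
  let ⟨V, hV, hI⟩ := exists_isChannel_mutInf_eq_zero hP hW
  ⟨⟨V, hV, hI ▸ ht⟩⟩

lemma minCondKL_le (hP : IsProb P) (hW : IsChannel W) (hWpos : ∀ x y, 0 < W x y) {t : ℝ}
    (hV : IsChannel V) (hVt : mutInf P V ≤ t) : minCondKL P W t ≤ condKL P V W :=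
  ciInf_le (f := fun V : {V : X → Y → ℝ // IsChannel V ∧ mutInf P V ≤ t} => condKL P V.1 W)
    ⟨0, forall_mem_range.2 fun V => condKL_nonneg hP V.2.1 hW hWpos⟩ ⟨V, hV, hVt⟩

lemma le_minCondKL (hP : IsProb P) (hW : IsChannel W) {t a : ℝ} (ht : 0 ≤ t)
    (h : ∀ V, IsChannel V → mutInf P V ≤ t → a ≤ condKL P V W) : a ≤ minCondKL P W t :=
  have := nonempty_mutInf_le hP hW ht
  le_ciInf fun V => h V.1 V.2.1 V.2.2

lemma exists_condKL_lt_minCondKL_add (hP : IsProb P) (hW : IsChannel W) {t ε : ℝ} (ht : 0 ≤ t)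
    (hε : 0 < ε) : ∃ V, IsChannel V ∧ mutInf P V ≤ t ∧ condKL P V W < minCondKL P W t + ε := by
  have := nonempty_mutInf_le hP hW ht
  obtain ⟨V, hV⟩ := exists_lt_of_ciInf_lt (lt_add_of_pos_right (minCondKL P W t) hε)
  exact ⟨V.1, V.2.1, V.2.2, hV⟩

lemma antitoneOn_minCondKL (hP : IsProb P) (hW : IsChannel W) (hWpos : ∀ x y, 0 < W x y) :
    AntitoneOn (minCondKL P W) (Ici 0) := fun _ hs _ _ hst =>
  le_minCondKL hP hW hs fun _ hV hVs => minCondKL_le hP hW hWpos hV (hVs.trans hst)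

lemma convexOn_minCondKL (hP : IsProb P) (hW : IsChannel W) (hWpos : ∀ x y, 0 < W x y) :
    ConvexOn ℝ (Ici 0) (minCondKL P W) := by
  refine ⟨convex_Ici 0, fun t₁ ht₁ t₂ ht₂ a b ha hb hab => ?_⟩
  refine le_of_forall_pos_le_add fun ε hε => ?_
  obtain ⟨V₁, hV₁, hI₁, hD₁⟩ := exists_condKL_lt_minCondKL_add (W := W) hP hW ht₁ hε
  obtain ⟨V₂, hV₂, hI₂, hD₂⟩ := exists_condKL_lt_minCondKL_add (W := W) hP hW ht₂ hε
  have hV : IsChannel (a • V₁ + b • V₂) := convex_setOf_isChannel hV₁ hV₂ ha hb hab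
  have hI : mutInf P (a • V₁ + b • V₂) ≤ a • t₁ + b • t₂ :=
    ((convexOn_mutInf hP.1).2 hV₁.nonneg hV₂.nonneg ha hb hab).trans (by
      simp only [smul_eq_mul]; gcongr)
  calc minCondKL P W (a • t₁ + b • t₂) ≤ condKL P (a • V₁ + b • V₂) W :=
        minCondKL_le hP hW hWpos hV hI
    _ ≤ a • condKL P V₁ W + b • condKL P V₂ W :=
        (convexOn_condKL hP.1 hWpos).2 hV₁.nonneg hV₂.nonneg ha hb hab
    _ ≤ a • (minCondKL P W t₁ + ε) + b • (minCondKL P W t₂ + ε) := by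
        simp only [smul_eq_mul]; gcongr
    _ = a • minCondKL P W t₁ + b • minCondKL P W t₂ + ε := by
        simp only [smul_eq_mul]; linear_combination ε * hab

lemma exists_nonneg_minCondKL_sub_mul_le (hP : IsProb P) (hW : IsChannel W)
    (hWpos : ∀ x y, 0 < W x y) {R : ℝ} (hR : 0 < R) :
    ∃ ρ, 0 ≤ ρ ∧ ∀ t, 0 ≤ t → minCondKL P W R - ρ * (t - R) ≤ minCondKL P W t := by
  have hF := convexOn_minCondKL hP hW hWpos
  have hR' : R ∈ interior (Ici 0) := by rwa [interior_Ici]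
  refine ⟨-derivWithin (minCondKL P W) (Ioi R) R, ?_, fun t ht => ?_⟩
  · have hslope := hF.rightDeriv_le_slope_of_mem_interior hR' (mem_Ici.2 (by linarith))
      (lt_add_one R)
    have hanti := antitoneOn_minCondKL hP hW hWpos hR.le (mem_Ici.2 (by linarith))
      (le_add_of_nonneg_right zero_le_one)
    rw [slope_def_field, add_sub_cancel_left, div_one] at hslope
    linarith
  · linarith [hF.add_rightDeriv_mul_sub_le hR' ht]

lemma lagrangian_sub_mul_le_minCondKL (hP : IsProb P) (hW : IsChannel W)
    (hWpos : ∀ x y, 0 < W x y) {ρ R : ℝ} (hρ : 0 ≤ ρ) (hR : 0 ≤ R) :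
    lagrangian P W ρ - ρ * R ≤ minCondKL P W R := by
  have hbdd : BddBelow (range fun V : {V : X → Y → ℝ // IsChannel V} =>
      condKL P V.1 W + ρ * mutInf P V.1) := by
    refine ⟨0, ?_⟩
    rintro _ ⟨V, rfl⟩
    have := condKL_nonneg hP V.2 hW hWpos
    have := mutInf_nonneg hP V.2
    positivity
  refine le_minCondKL hP hW hR fun V hV hVR => ?_
  have := ciInf_le hbdd ⟨V, hV⟩
  have : ρ * mutInf P V ≤ ρ * R := by gcongr
  simp only [lagrangian] at *
  linarith

lemma minCondKL_le_lagrangian_sub_mul (hP : IsProb P) (hW : IsChannel W)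
    (hWpos : ∀ x y, 0 < W x y) {ρ R : ℝ}
    (hρ : ∀ t, 0 ≤ t → minCondKL P W R - ρ * (t - R) ≤ minCondKL P W t) :
    minCondKL P W R ≤ lagrangian P W ρ - ρ * R := by
  obtain ⟨V₀, hV₀, -⟩ := exists_isChannel_mutInf_eq_zero hP hW
  have : Nonempty {V : X → Y → ℝ // IsChannel V} := ⟨⟨V₀, hV₀⟩⟩
  rw [le_sub_iff_add_le]
  refine le_ciInf fun V => ?_
  have := hρ _ (mutInf_nonneg hP V.2)
  have := minCondKL_le hP hW hWpos V.2 le_rfl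
  linarith

end

theorem sphere_packing_sup_form_eq_Haroutunian_general
    (W : X → Y → ℝ) (hW : IsChannel W) (hWpos : ∀ x y, 0 < W x y)
    (P : X → ℝ) (hP : IsProb P) (R : ℝ) (hR : 0 < R) :
    (⨆ ρ : {ρ : ℝ // 0 ≤ ρ},
      (⨅ V : {V : X → Y → ℝ // IsChannel V}, condKL P V.1 W + ρ.1 * mutInf P V.1)
        - ρ.1 * R) =
    (⨅ V : {V : X → Y → ℝ // IsChannel V ∧ mutInf P V ≤ R}, condKL P V.1 W) := by
  change (⨆ ρ : {ρ : ℝ // 0 ≤ ρ}, lagrangian P W ρ.1 - ρ.1 * R) = minCondKL P W R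
  have hweak : ∀ ρ : {ρ : ℝ // 0 ≤ ρ}, lagrangian P W ρ.1 - ρ.1 * R ≤ minCondKL P W R :=
    fun ρ => lagrangian_sub_mul_le_minCondKL hP hW hWpos ρ.2 hR.le
  obtain ⟨ρ, hρ, hsupport⟩ := exists_nonneg_minCondKL_sub_mul_le hP hW hWpos hR
  have : Nonempty {ρ : ℝ // 0 ≤ ρ} := ⟨⟨ρ, hρ⟩⟩
  exact le_antisymm (ciSup_le hweak) (le_ciSup_of_le ⟨_, forall_mem_range.2 hweak⟩ ⟨ρ, hρ⟩
    (minCondKL_le_lagrangian_sub_mul hP hW hWpos hsupport))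

/-- for a strictly positive classical channel `W` and distribution `P`,
`sup_{ρ≥0} [min_V (D(V‖W|P) + ρ I(P,V)) − ρR] = min_{V : I(P,V) ≤ R} D(V‖W|P)`
for every `R > 0`. -/
theorem sphere_packing_sup_form_eq_Haroutunian [Nonempty X] [Nonempty Y]
    (W : X → Y → ℝ) (hW : IsChannel W) (hWpos : ∀ x y, 0 < W x y)
    (P : X → ℝ) (hP : IsProb P) (R : ℝ) (hR : 0 < R) :
    (⨆ ρ : {ρ : ℝ // 0 ≤ ρ},
      (⨅ V : {V : X → Y → ℝ // IsChannel V}, condKL P V.1 W + ρ.1 * mutInf P V.1)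
        - ρ.1 * R) =
    (⨅ V : {V : X → Y → ℝ // IsChannel V ∧ mutInf P V ≤ R}, condKL P V.1 W) :=
  sphere_packing_sup_form_eq_Haroutunian_general W hW hWpos P hP R hR
end

section
/- For commuting density operators A, B (simultaneously diagonalizable with strictly positive eigenvalues), define V_s = A^{1−s}B^s / Tr(A^{1−s}B^s) for s ∈ (0,1) and μ(s) = log Tr(A^{1−s}B^s). Then μ'(s) computed by differentiating satisfies: −μ(s) + s·μ'(s) = D(V_s‖A) and −μ(s) − (1−s)·μ'(s) = D(V_s‖B), where D(P‖Q) = Tr P(log P − log Q) is the Kullback-Leibler divergence. -/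
/-!
Commuting strictly positive operators have commuting logarithms, so
`A^{1-s} B^s = exp ((1-s) log A + s log B)`, hence `log V_s = (1-s) log A + s log B - μ(s)`.
Thus `log V_s - log A = -μ(s) + s (log B - log A)`, and pairing with `V_s`, which has trace one,
gives `D(V_s‖A) = -μ(s) + s μ'(s)`; likewise `log V_s - log B = -μ(s) - (1-s) (log B - log A)`.
-/

open Matrix
open scoped ComplexOrder

noncomputable def mlog {d : ℕ} (A : Matrix (Fin d) (Fin d) ℂ) : Matrix (Fin d) (Fin d) ℂ :=
  cfc (fun x : ℝ => Real.log x) A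

noncomputable def IsDensity {d : ℕ} (A : Matrix (Fin d) (Fin d) ℂ) : Prop :=
  A.PosSemidef ∧ A.trace = 1

/-- Quantum relative entropy `D(P‖Q) = Tr P(log P − log Q)`. -/
noncomputable def relEnt {d : ℕ} (P Q : Matrix (Fin d) (Fin d) ℂ) : ℝ :=
  (P * (mlog P - mlog Q)).trace.re

namespace CFC

open NormedSpace

variable {A : Type*} [CStarAlgebra A]

lemma _root_.Commute.log {a b : A} (hab : Commute a b) : Commute (log a) (log b) :=
  ((hab.cfc_real Real.log).symm.cfc_real Real.log).symm

lemma isSelfAdjoint_smul_log_add_smul_log (a b : A) (s t : ℝ) :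
    IsSelfAdjoint (s • log a + t • log b) :=
  ((IsSelfAdjoint.all s).smul .log).add ((IsSelfAdjoint.all t).smul .log)

variable [PartialOrder A] [StarOrderedRing A]

lemma cfc_rpow_eq_exp_smul_log {a : A} (ha : IsStrictlyPositive a) (t : ℝ) :
    cfc (fun x : ℝ => x ^ t) a = exp (t • log a) := by
  have hlog : ContinuousOn Real.log (spectrum ℝ a) :=
    Real.continuousOn_log.mono fun x hx => (ha.spectrum_pos hx).ne'
  rw [log, ← cfc_const_mul t Real.log a hlog, ← real_exp_eq_normedSpace_exp,
    ← cfc_comp' Real.exp (fun x => t * Real.log x) a (by fun_prop) (by fun_prop)]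
  refine cfc_congr fun x hx => ?_
  rw [Real.rpow_def_of_pos (ha.spectrum_pos hx), mul_comm]

lemma _root_.IsSelfAdjoint.isStrictlyPositive_exp {x : A} (hx : IsSelfAdjoint x) :
    IsStrictlyPositive (exp x) := by
  rw [← real_exp_eq_normedSpace_exp]
  exact (cfc_isStrictlyPositive_iff _ _).mpr fun y _ => Real.exp_pos y

variable {a b : A}

lemma cfc_rpow_mul_cfc_rpow_eq_exp (ha : IsStrictlyPositive a) (hb : IsStrictlyPositive b)
    (hab : Commute a b) (s t : ℝ) :
    cfc (fun x : ℝ => x ^ s) a * cfc (fun x : ℝ => x ^ t) b =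
      exp (s • log a + t • log b) := by
  -- `exp_add_of_commute` is stated for normed `ℚ`-algebras.
  let : NormedAlgebra ℚ A := NormedAlgebra.restrictScalars ℚ ℝ A
  rw [cfc_rpow_eq_exp_smul_log ha, cfc_rpow_eq_exp_smul_log hb,
    exp_add_of_commute ((hab.log.smul_left s).smul_right t)]

lemma isStrictlyPositive_cfc_rpow_mul_cfc_rpow (ha : IsStrictlyPositive a)
    (hb : IsStrictlyPositive b) (hab : Commute a b) (s t : ℝ) :
    IsStrictlyPositive (cfc (fun x : ℝ => x ^ s) a * cfc (fun x : ℝ => x ^ t) b) := by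
  rw [cfc_rpow_mul_cfc_rpow_eq_exp ha hb hab]
  exact (isSelfAdjoint_smul_log_add_smul_log a b s t).isStrictlyPositive_exp

lemma log_smul_cfc_rpow_mul_cfc_rpow (ha : IsStrictlyPositive a)
    (hb : IsStrictlyPositive b) (hab : Commute a b) (s t : ℝ) {r : ℝ} (hr : 0 < r) :
    log (r • (cfc (fun x : ℝ => x ^ s) a * cfc (fun x : ℝ => x ^ t) b)) =
      algebraMap ℝ A (Real.log r) + (s • log a + t • log b) := by
  rw [log_smul' _ hr (isStrictlyPositive_cfc_rpow_mul_cfc_rpow ha hb hab s t),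
    cfc_rpow_mul_cfc_rpow_eq_exp ha hb hab,
    log_exp _ (isSelfAdjoint_smul_log_add_smul_log a b s t)]

end CFC

section MatrixExpLog

-- The C⋆-algebra structure is only needed to apply the lemmas above; `mpow` and `mlog` do not
-- depend on it.
open scoped Matrix.Norms.L2Operator MatrixOrder

variable {d : ℕ} {A B : Matrix (Fin d) (Fin d) ℂ}

lemma mlog_smul_mpow_mul_mpow (hA : A.PosDef) (hB : B.PosDef) (hAB : Commute A B)
    (s t : ℝ) {r : ℝ} (hr : 0 < r) :
    mlog (r • (mpow A s * mpow B t)) =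
      algebraMap ℝ _ (Real.log r) + (s • mlog A + t • mlog B) :=
  CFC.log_smul_cfc_rpow_mul_cfc_rpow hA.isStrictlyPositive hB.isStrictlyPositive hAB s t hr

lemma re_trace_mpow_mul_mpow_pos [NeZero d] (hA : A.PosDef) (hB : B.PosDef) (hAB : Commute A B)
    (s t : ℝ) : 0 < (mpow A s * mpow B t).trace.re :=
  (Complex.lt_def.mp (CFC.isStrictlyPositive_cfc_rpow_mul_cfc_rpow hA.isStrictlyPositive
    hB.isStrictlyPositive hAB s t).posDef.trace_pos).1

end MatrixExpLog

lemma Matrix.re_trace_mul_algebraMap_add_smul {n : Type*} [Fintype n] [DecidableEq n]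
    (V X : Matrix n n ℂ) (c r : ℝ) :
    (V * (algebraMap ℝ _ c + r • X)).trace.re = c * V.trace.re + r * (V * X).trace.re := by
  simp [mul_add, Algebra.algebraMap_eq_smul_one]

theorem commuting_exponents_eq_KL_general {d : ℕ}
    (A B : Matrix (Fin d) (Fin d) ℂ)
    (hA : IsDensity A)
    (hApd : A.PosDef) (hBpd : B.PosDef) (hcomm : A * B = B * A)
    (s : ℝ)
    (T : ℝ) (hT : T = (mpow A (1 - s) * mpow B s).trace.re)
    (Vs : Matrix (Fin d) (Fin d) ℂ)
    (hVs : Vs = ((T : ℂ)⁻¹) • (mpow A (1 - s) * mpow B s))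
    (μs μ's : ℝ) (hμ : μs = Real.log T)
    (hμ' : μ's = ((mpow A (1 - s) * mpow B s) * (mlog B - mlog A)).trace.re / T) :
    -μs + s * μ's = relEnt Vs A ∧ -μs - (1 - s) * μ's = relEnt Vs B := by
  have : NeZero d := ⟨by rintro rfl; simpa using hA.2⟩
  have hTpos : 0 < T := hT ▸ re_trace_mpow_mul_mpow_pos hApd hBpd hcomm (1 - s) s
  have hVs' : Vs = T⁻¹ • (mpow A (1 - s) * mpow B s) := by
    rw [hVs, ← Complex.ofReal_inv, Complex.coe_smul]
  have hlogVs : mlog Vs = algebraMap ℝ _ (-μs) + ((1 - s) • mlog A + s • mlog B) := by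
    rw [hVs', mlog_smul_mpow_mul_mpow hApd hBpd hcomm _ _ (inv_pos.2 hTpos), Real.log_inv, hμ]
  have htrace : Vs.trace.re = 1 := by
    rw [hVs', trace_smul, Complex.real_smul, Complex.re_ofReal_mul, ← hT,
      inv_mul_cancel₀ hTpos.ne']
  have hμ'Vs : μ's = (Vs * (mlog B - mlog A)).trace.re := by
    rw [hVs', smul_mul_assoc, trace_smul, Complex.real_smul, Complex.re_ofReal_mul, hμ',
      inv_mul_eq_div]
  constructor
  · have hlog : mlog Vs - mlog A = algebraMap ℝ _ (-μs) + s • (mlog B - mlog A) := by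
      rw [hlogVs]; module
    rw [relEnt, hlog, re_trace_mul_algebraMap_add_smul, htrace, ← hμ'Vs]
    ring
  · have hlog : mlog Vs - mlog B = algebraMap ℝ _ (-μs) + (-(1 - s)) • (mlog B - mlog A) := by
      rw [hlogVs]; module
    rw [relEnt, hlog, re_trace_mul_algebraMap_add_smul, htrace, ← hμ'Vs]
    ring

/-- for commuting strictly positive density operators `A`, `B`,
with `V_s = A^{1−s}B^s / Tr(A^{1−s}B^s)`, `μ(s) = log Tr(A^{1−s}B^s)` and
`μ'(s) = Tr(A^{1−s}B^s(log B − log A)) / Tr(A^{1−s}B^s)`, we have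
`−μ(s) + s·μ'(s) = D(V_s‖A)` and `−μ(s) − (1−s)·μ'(s) = D(V_s‖B)`. -/
theorem commuting_exponents_eq_KL {d : ℕ}
    (A B : Matrix (Fin d) (Fin d) ℂ)
    (hA : IsDensity A) (hB : IsDensity B)
    (hApd : A.PosDef) (hBpd : B.PosDef) (hcomm : A * B = B * A)
    (s : ℝ) (hs : s ∈ Set.Ioo (0 : ℝ) 1)
    (T : ℝ) (hT : T = (mpow A (1 - s) * mpow B s).trace.re)
    (Vs : Matrix (Fin d) (Fin d) ℂ)
    (hVs : Vs = ((T : ℂ)⁻¹) • (mpow A (1 - s) * mpow B s))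
    (μs μ's : ℝ) (hμ : μs = Real.log T)
    (hμ' : μ's = ((mpow A (1 - s) * mpow B s) * (mlog B - mlog A)).trace.re / T) :
    -μs + s * μ's = relEnt Vs A ∧ -μs - (1 - s) * μ's = relEnt Vs B :=
  commuting_exponents_eq_KL_general A B hA hApd hBpd hcomm s T hT Vs hVs μs μ's hμ hμ'
end
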